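/- arXiv:2002.02859 — 6 statements merged into one kernel-verified Lean document; each statement's English description precedes it below -/
import Mathlib

section
/- Let X and X' each be real random variables with the exponential distribution of rate 1/(βΩ), where β > 0 and Ω > 0. Let P_R > 0, P_Δ > 0 and let j_0 ≤ j_1 be real numbers. Define the detection error probability P_E(τ) = P(P_R·X + j_0 > τ) + P((P_R + P_Δ)·X' + j_1 < τ). Then P_E(τ) = 1 if τ < j_0; P_E(τ) = exp((j_0 − τ)/(β·P_R·Ω)) if j_0 ≤ τ < j_1; and P_E(τ) = 1 + exp((j_0 − τ)/(β·P_R·Ω)) − exp((j_1 − τ)/(β·(P_R + P_Δ)·Ω)) if τ ≥ j_1. -/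
/-!
An exponential variable of rate `r` scaled by `a > 0` is exponential of rate `r / a`, so each
term of `P_E` is an explicit function of the threshold: `P(a·X + j > τ)` is `1` below `j` and
`exp (r (j - τ) / a)` above it, while `P(a·X + j < τ)` is `0` below `j` and
`1 - exp (r (j - τ) / a)` above it. Since `j₀ ≤ j₁`, the three ranges of `τ` sort out which
branch each term takes.
-/

open MeasureTheory ProbabilityTheory Real Set

namespace ProbabilityTheory

instance nullSingletonClass_expMeasure (r : ℝ) : NullSingletonClass (expMeasure r) := by
  unfold expMeasure gammaMeasure
  infer_instance

variable {r : ℝ}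

lemma expMeasure_real_Iic (hr : 0 < r) (x : ℝ) :
    (expMeasure r).real (Iic x) = if 0 ≤ x then 1 - exp (-(r * x)) else 0 := by
  have := isProbabilityMeasure_expMeasure hr
  rw [← cdf_eq_real, cdf_expMeasure_eq hr]

lemma expMeasure_real_Iio (hr : 0 < r) (x : ℝ) :
    (expMeasure r).real (Iio x) = if 0 ≤ x then 1 - exp (-(r * x)) else 0 := by
  rw [measureReal_congr Iio_ae_eq_Iic, expMeasure_real_Iic hr]

lemma expMeasure_real_Ioi (hr : 0 < r) (x : ℝ) :
    (expMeasure r).real (Ioi x) = if 0 ≤ x then exp (-(r * x)) else 1 := by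
  have := isProbabilityMeasure_expMeasure hr
  rw [← compl_Iic, probReal_compl_eq_one_sub measurableSet_Iic, expMeasure_real_Iic hr]
  split_ifs <;> ring

variable {Ω : Type*} [MeasurableSpace Ω] {μ : Measure Ω} {X : Ω → ℝ} {a : ℝ}

lemma measureReal_lt_mul_add (hX : Measurable X) (ha : 0 < a) (j τ : ℝ) :
    μ.real {ω | τ < a * X ω + j} = (μ.map X).real (Ioi ((τ - j) / a)) := by
  rw [map_measureReal_apply hX measurableSet_Ioi]
  congr 1
  ext ω
  simp only [mem_ofPred_eq, mem_preimage, mem_Ioi, div_lt_iff₀ ha]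
  constructor <;> intro h <;> linarith

lemma measureReal_mul_add_lt (hX : Measurable X) (ha : 0 < a) (j τ : ℝ) :
    μ.real {ω | a * X ω + j < τ} = (μ.map X).real (Iio ((τ - j) / a)) := by
  rw [map_measureReal_apply hX measurableSet_Iio]
  congr 1
  ext ω
  simp only [mem_ofPred_eq, mem_preimage, mem_Iio, lt_div_iff₀ ha]
  constructor <;> intro h <;> linarith

lemma measureReal_lt_mul_add_of_map_eq_expMeasure (hr : 0 < r) (hX : Measurable X)
    (hlaw : μ.map X = expMeasure r) (ha : 0 < a) (j τ : ℝ) :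
    μ.real {ω | τ < a * X ω + j} = if j ≤ τ then exp (r * (j - τ) / a) else 1 := by
  rw [measureReal_lt_mul_add hX ha, hlaw, expMeasure_real_Ioi hr]
  simp only [le_div_iff₀ ha, zero_mul, sub_nonneg]
  congr 2
  ring

lemma measureReal_mul_add_lt_of_map_eq_expMeasure (hr : 0 < r) (hX : Measurable X)
    (hlaw : μ.map X = expMeasure r) (ha : 0 < a) (j τ : ℝ) :
    μ.real {ω | a * X ω + j < τ} = if j ≤ τ then 1 - exp (r * (j - τ) / a) else 0 := by
  rw [measureReal_mul_add_lt hX ha, hlaw, expMeasure_real_Iio hr]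
  simp only [le_div_iff₀ ha, zero_mul, sub_nonneg]
  congr 3
  ring

end ProbabilityTheory

theorem detection_error_probability_general
    {α : Type*} [MeasureSpace α]
    (X X' : α → ℝ) (hXm : Measurable X) (hX'm : Measurable X')
    (β Ω P_R P_Δ j₀ j₁ : ℝ) (hβ : 0 < β) (hΩ : 0 < Ω) (hPR : 0 < P_R) (hPΔ : 0 < P_Δ)
    (hj : j₀ ≤ j₁)
    (hX : Measure.map X ℙ = expMeasure (1 / (β * Ω)))
    (hX' : Measure.map X' ℙ = expMeasure (1 / (β * Ω)))
    (P_E : ℝ → ℝ)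
    (hPE : ∀ τ, P_E τ = (ℙ {ω | P_R * X ω + j₀ > τ}).toReal
        + (ℙ {ω | (P_R + P_Δ) * X' ω + j₁ < τ}).toReal) :
    ∀ τ : ℝ,
      (τ < j₀ → P_E τ = 1) ∧
      (j₀ ≤ τ → τ < j₁ → P_E τ = exp ((j₀ - τ) / (β * P_R * Ω))) ∧
      (τ ≥ j₁ → P_E τ = 1 + exp ((j₀ - τ) / (β * P_R * Ω))
          - exp ((j₁ - τ) / (β * (P_R + P_Δ) * Ω))) := by
  intro τ
  have hr : 0 < 1 / (β * Ω) := by positivity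
  have hexponent (a j : ℝ) : 1 / (β * Ω) * (j - τ) / a = (j - τ) / (β * a * Ω) := by ring
  have hPE' : P_E τ = (if j₀ ≤ τ then exp ((j₀ - τ) / (β * P_R * Ω)) else 1)
      + (if j₁ ≤ τ then 1 - exp ((j₁ - τ) / (β * (P_R + P_Δ) * Ω)) else 0) := by
    simp only [hPE, ← measureReal_def, gt_iff_lt]
    rw [measureReal_lt_mul_add_of_map_eq_expMeasure hr hXm hX hPR,
      measureReal_mul_add_lt_of_map_eq_expMeasure hr hX'm hX' (by positivity),
      hexponent, hexponent]
  refine ⟨fun h => ?_, fun h₀ h₁ => ?_, fun h => ?_⟩ <;> rw [hPE']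
  · rw [if_neg (by linarith), if_neg (by linarith)]
    ring
  · rw [if_pos h₀, if_neg (by linarith)]
    ring
  · rw [if_pos (by linarith), if_pos h]
    ring

/-- With `X`, `X'` exponentially distributed with rate `1/(β·Ω)`,
`β, Ω, P_R, P_Δ > 0` and `j₀ ≤ j₁`, the detection error probability
`P_E(τ) = P(P_R·X + j₀ > τ) + P((P_R+P_Δ)·X' + j₁ < τ)` satisfies the closed form:
`1` for `τ < j₀`; `exp((j₀−τ)/(β·P_R·Ω))` for `j₀ ≤ τ < j₁`; and
`1 + exp((j₀−τ)/(β·P_R·Ω)) − exp((j₁−τ)/(β·(P_R+P_Δ)·Ω))` for `τ ≥ j₁`. -/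
theorem detection_error_probability
    {α : Type*} [MeasureSpace α] [IsProbabilityMeasure (ℙ : Measure α)]
    (X X' : α → ℝ) (hXm : Measurable X) (hX'm : Measurable X')
    (β Ω P_R P_Δ j₀ j₁ : ℝ) (hβ : 0 < β) (hΩ : 0 < Ω) (hPR : 0 < P_R) (hPΔ : 0 < P_Δ)
    (hj : j₀ ≤ j₁)
    (hX : Measure.map X ℙ = expMeasure (1 / (β * Ω)))
    (hX' : Measure.map X' ℙ = expMeasure (1 / (β * Ω)))
    (P_E : ℝ → ℝ)
    (hPE : ∀ τ, P_E τ = (ℙ {ω | P_R * X ω + j₀ > τ}).toReal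
        + (ℙ {ω | (P_R + P_Δ) * X' ω + j₁ < τ}).toReal) :
    ∀ τ : ℝ,
      (τ < j₀ → P_E τ = 1) ∧
      (j₀ ≤ τ → τ < j₁ → P_E τ = exp ((j₀ - τ) / (β * P_R * Ω))) ∧
      (τ ≥ j₁ → P_E τ = 1 + exp ((j₀ - τ) / (β * P_R * Ω))
          - exp ((j₁ - τ) / (β * (P_R + P_Δ) * Ω))) :=
  detection_error_probability_general X X' hXm hX'm β Ω P_R P_Δ j₀ j₁ hβ hΩ hPR hPΔ hj hX hX' P_E
    hPE
end

section
/- Fix reals a ≥ 0, g ≥ 0, σ² > 0, P_R > 0, P_Δ > 0, β > 0, Ω > 0, and set j_0 = a + P_R·g + σ², j_1 = a + (P_R + P_Δ)·g + σ². Define P_E : ℝ → ℝ by P_E(τ) = 1 for τ < j_0, P_E(τ) = exp((j_0 − τ)/(β·P_R·Ω)) for j_0 ≤ τ < j_1, and P_E(τ) = 1 + exp((j_0 − τ)/(β·P_R·Ω)) − exp((j_1 − τ)/(β·(P_R + P_Δ)·Ω)) for τ ≥ j_1. Define τ_0 = −(β·P_R·(P_R + P_Δ)·Ω/P_Δ)·ln(P_R/(P_R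 + P_Δ)) + a + σ², and let τ* = j_1 if j_1 ≥ τ_0 and τ* = τ_0 otherwise. Then τ* is a global minimizer of P_E, i.e. P_E(τ*) ≤ P_E(τ) for every real τ. -/
/-!
Put `c₁ = β P_R Ω`, `c₂ = β (P_R + P_Δ) Ω`. On `τ ≥ j₁` write
`P_E(t) = 1 + A e^w - B e^{r w}` with `w = (τ - t)/c₁`, `r = c₁/c₂ ≤ 1` and `A, B` the two
exponentials at `τ`. Bernoulli's inequality `e^{r w} ≤ 1 + r (e^w - 1)` gives
`P_E(t) - P_E(τ) ≥ (A - r B)(e^w - 1)`. At `τ = τ₀` the exponents differ by exactly `log r`,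
so `A = r B` and `τ₀` minimises the tail; when `τ₀ ≤ j₁` we have `A ≤ r B` at `τ = j₁` and
`w ≤ 0` on the tail, so `j₁` minimises it. Below `j₁`, `P_E` never drops below `P_E(j₁)`.
-/

open Real

lemma exp_mul_le_one_add_mul {r : ℝ} (hr₀ : 0 ≤ r) (hr₁ : r ≤ 1) (w : ℝ) :
    exp (r * w) ≤ 1 + r * (exp w - 1) := by
  have h := rpow_one_add_le_one_add_mul_self (s := exp w - 1) (by linarith [exp_pos w]) hr₀ hr₁
  rwa [add_sub_cancel, ← exp_mul, mul_comm] at h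

section DetectionError

variable {j₀ j₁ c₁ c₂ : ℝ}

noncomputable def detectionErrorTail (j₀ j₁ c₁ c₂ τ : ℝ) : ℝ :=
  1 + exp ((j₀ - τ) / c₁) - exp ((j₁ - τ) / c₂)

noncomputable def detectionError (j₀ j₁ c₁ c₂ τ : ℝ) : ℝ :=
  if τ < j₀ then 1
  else if τ < j₁ then exp ((j₀ - τ) / c₁)
  else detectionErrorTail j₀ j₁ c₁ c₂ τ

lemma detectionErrorTail_ge (hc₁ : 0 < c₁) (hc : c₁ ≤ c₂) (τ t : ℝ) :
    detectionErrorTail j₀ j₁ c₁ c₂ τ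
        + (exp ((j₀ - τ) / c₁) - c₁ / c₂ * exp ((j₁ - τ) / c₂)) * (exp ((τ - t) / c₁) - 1)
      ≤ detectionErrorTail j₀ j₁ c₁ c₂ t := by
  set w := (τ - t) / c₁
  have hc₂ : 0 < c₂ := hc₁.trans_le hc
  have h₀ : (j₀ - t) / c₁ = (j₀ - τ) / c₁ + w := by ring
  have h₁ : (j₁ - t) / c₂ = (j₁ - τ) / c₂ + c₁ / c₂ * w := by
    simp only [w]; field_simp; ring
  have hbern := mul_le_mul_of_nonneg_left
    (exp_mul_le_one_add_mul (div_nonneg hc₁.le hc₂.le) ((div_le_one hc₂).2 hc) w)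
    (exp_pos ((j₁ - τ) / c₂)).le
  simp only [detectionErrorTail, h₀, h₁, exp_add]
  linarith

lemma detectionErrorTail_le_of_stationary (hc₁ : 0 < c₁) (hc : c₁ ≤ c₂) {τ : ℝ}
    (hτ : (j₀ - τ) / c₁ - (j₁ - τ) / c₂ = log (c₁ / c₂)) (t : ℝ) :
    detectionErrorTail j₀ j₁ c₁ c₂ τ ≤ detectionErrorTail j₀ j₁ c₁ c₂ t := by
  have hbalance : exp ((j₀ - τ) / c₁) = c₁ / c₂ * exp ((j₁ - τ) / c₂) := by
    rw [eq_add_of_sub_eq hτ, exp_add, exp_log (div_pos hc₁ (hc₁.trans_le hc))]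
  simpa [hbalance] using detectionErrorTail_ge (j₀ := j₀) (j₁ := j₁) hc₁ hc τ t

lemma detectionErrorTail_le_of_le (hc₁ : 0 < c₁) (hc : c₁ ≤ c₂) {τ t : ℝ}
    (hτ : (j₀ - τ) / c₁ - (j₁ - τ) / c₂ ≤ log (c₁ / c₂)) (ht : τ ≤ t) :
    detectionErrorTail j₀ j₁ c₁ c₂ τ ≤ detectionErrorTail j₀ j₁ c₁ c₂ t := by
  have hdom : exp ((j₀ - τ) / c₁) ≤ c₁ / c₂ * exp ((j₁ - τ) / c₂) := by
    rw [← exp_log (div_pos hc₁ (hc₁.trans_le hc)), ← exp_add]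
    exact exp_le_exp.2 (by linarith)
  have hdecay : exp ((τ - t) / c₁) ≤ 1 :=
    exp_le_one_iff.2 (div_nonpos_of_nonpos_of_nonneg (by linarith) hc₁.le)
  have := detectionErrorTail_ge (j₀ := j₀) (j₁ := j₁) hc₁ hc τ t
  nlinarith

lemma detectionError_eq_tail (hj : j₀ ≤ j₁) {τ : ℝ} (hτ : j₁ ≤ τ) :
    detectionError j₀ j₁ c₁ c₂ τ = detectionErrorTail j₀ j₁ c₁ c₂ τ := by
  rw [detectionError, if_neg (by linarith), if_neg (by linarith)]

lemma detectionErrorTail_self_le_of_lt (hc₁ : 0 < c₁) (hj : j₀ ≤ j₁) {τ : ℝ} (hτ : τ < j₁) :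
    detectionErrorTail j₀ j₁ c₁ c₂ j₁ ≤ detectionError j₀ j₁ c₁ c₂ τ := by
  rw [detectionErrorTail, sub_self, zero_div, exp_zero, add_sub_cancel_left, detectionError,
    if_pos hτ]
  split_ifs with hτ₀
  · exact exp_le_one_iff.2 (div_nonpos_of_nonpos_of_nonneg (by linarith) hc₁.le)
  · exact exp_le_exp.2 (by gcongr)

lemma detectionError_le_of_tail_le (hc₁ : 0 < c₁) (hj : j₀ ≤ j₁) {τ : ℝ} (hτ : j₁ ≤ τ)
    (hmin : ∀ t, j₁ ≤ t → detectionErrorTail j₀ j₁ c₁ c₂ τ ≤ detectionErrorTail j₀ j₁ c₁ c₂ t)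
    (t : ℝ) : detectionError j₀ j₁ c₁ c₂ τ ≤ detectionError j₀ j₁ c₁ c₂ t := by
  rw [detectionError_eq_tail hj hτ]
  rcases le_or_gt j₁ t with ht | ht
  · exact (hmin t ht).trans (detectionError_eq_tail hj ht).ge
  · exact (hmin j₁ le_rfl).trans (detectionErrorTail_self_le_of_lt hc₁ hj ht)

end DetectionError

lemma exponent_gap_sub_log_eq {a g σ2 P_R P_Δ β Ω : ℝ} (hPR : 0 < P_R) (hPΔ : 0 < P_Δ)
    (hβ : 0 < β) (hΩ : 0 < Ω) (τ : ℝ) :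
    (a + P_R * g + σ2 - τ) / (β * P_R * Ω)
        - (a + (P_R + P_Δ) * g + σ2 - τ) / (β * (P_R + P_Δ) * Ω)
        - log (β * P_R * Ω / (β * (P_R + P_Δ) * Ω))
      = (-(β * P_R * (P_R + P_Δ) * Ω / P_Δ) * log (P_R / (P_R + P_Δ)) + a + σ2 - τ)
        / (β * P_R * (P_R + P_Δ) * Ω / P_Δ) := by
  have hPRΔ : 0 < P_R + P_Δ := by linarith
  rw [mul_div_mul_right _ _ hΩ.ne', mul_div_mul_left _ _ hβ.ne']
  field_simp
  ring

theorem optimal_detection_threshold_general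
    (a g σ2 P_R P_Δ β Ω : ℝ)
    (hg : 0 ≤ g)
    (hPR : 0 < P_R) (hPΔ : 0 < P_Δ) (hβ : 0 < β) (hΩ : 0 < Ω)
    (j₀ j₁ τ₀ τstar : ℝ) (P_E : ℝ → ℝ)
    (hj₀ : j₀ = a + P_R * g + σ2)
    (hj₁ : j₁ = a + (P_R + P_Δ) * g + σ2)
    (hPE : ∀ τ, P_E τ =
      if τ < j₀ then 1
      else if τ < j₁ then exp ((j₀ - τ) / (β * P_R * Ω))
      else 1 + exp ((j₀ - τ) / (β * P_R * Ω))
        - exp ((j₁ - τ) / (β * (P_R + P_Δ) * Ω)))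
    (hτ₀ : τ₀ = -(β * P_R * (P_R + P_Δ) * Ω / P_Δ) * Real.log (P_R / (P_R + P_Δ))
        + a + σ2)
    (hτstar : τstar = if j₁ ≥ τ₀ then j₁ else τ₀) :
    ∀ τ : ℝ, P_E τstar ≤ P_E τ := by
  have hc₁ : 0 < β * P_R * Ω := by positivity
  have hc : β * P_R * Ω ≤ β * (P_R + P_Δ) * Ω := by gcongr; linarith
  have hK : 0 < β * P_R * (P_R + P_Δ) * Ω / P_Δ := by positivity
  have hj : j₀ ≤ j₁ := by rw [hj₀, hj₁]; nlinarith
  have hgap := exponent_gap_sub_log_eq (a := a) (g := g) (σ2 := σ2) hPR hPΔ hβ hΩ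
  rw [← hj₀, ← hj₁, ← hτ₀] at hgap
  obtain rfl : P_E = detectionError j₀ j₁ (β * P_R * Ω) (β * (P_R + P_Δ) * Ω) := funext hPE
  split_ifs at hτstar with hτ₀j₁ <;> subst hτstar
  · refine detectionError_le_of_tail_le hc₁ hj le_rfl fun t ht ↦ ?_
    refine detectionErrorTail_le_of_le hc₁ hc ?_ ht
    rw [← sub_nonpos, hgap]
    exact div_nonpos_of_nonpos_of_nonneg (by linarith) hK.le
  · refine detectionError_le_of_tail_le hc₁ hj (by linarith) fun t _ ↦ ?_
    refine detectionErrorTail_le_of_stationary hc₁ hc ?_ t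
    rw [← sub_eq_zero, hgap, sub_self, zero_div]

/-- **Theorem 3: optimal detection threshold.** With
`j₀ = a + P_R·g + σ²`, `j₁ = a + (P_R+P_Δ)·g + σ²`, the piecewise detection error
probability `P_E`, and `τ₀ = −(β·P_R·(P_R+P_Δ)·Ω/P_Δ)·ln(P_R/(P_R+P_Δ)) + a + σ²`,
the threshold `τ* = j₁` if `j₁ ≥ τ₀` and `τ* = τ₀` otherwise is a global minimizer
of `P_E`. -/
theorem optimal_detection_threshold
    (a g σ2 P_R P_Δ β Ω : ℝ)
    (ha : 0 ≤ a) (hg : 0 ≤ g) (hσ : 0 < σ2)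
    (hPR : 0 < P_R) (hPΔ : 0 < P_Δ) (hβ : 0 < β) (hΩ : 0 < Ω)
    (j₀ j₁ τ₀ τstar : ℝ) (P_E : ℝ → ℝ)
    (hj₀ : j₀ = a + P_R * g + σ2)
    (hj₁ : j₁ = a + (P_R + P_Δ) * g + σ2)
    (hPE : ∀ τ, P_E τ =
      if τ < j₀ then 1
      else if τ < j₁ then exp ((j₀ - τ) / (β * P_R * Ω))
      else 1 + exp ((j₀ - τ) / (β * P_R * Ω))
        - exp ((j₁ - τ) / (β * (P_R + P_Δ) * Ω)))
    (hτ₀ : τ₀ = -(β * P_R * (P_R + P_Δ) * Ω / P_Δ) * Real.log (P_R / (P_R + P_Δ))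
        + a + σ2)
    (hτstar : τstar = if j₁ ≥ τ₀ then j₁ else τ₀) :
    ∀ τ : ℝ, P_E τstar ≤ P_E τ :=
  optimal_detection_threshold_general a g σ2 P_R P_Δ β Ω hg hPR hPΔ hβ hΩ j₀ j₁ τ₀ τstar P_E hj₀ hj₁
    hPE hτ₀ hτstar
end

section
/- Fix reals a ≥ 0, g ≥ 0, σ² > 0, P_R > 0, P_Δ > 0, β > 0, Ω > 0, and set j_0 = a + P_R·g + σ², j_1 = a + (P_R + P_Δ)·g + σ², and τ_0 = −(β·P_R·(P_R + P_Δ)·Ω/P_Δ)·ln(P_R/(P_R + P_Δ)) + a + σ². Define P_E : ℝ → ℝ by P_E(τ) = 1 for τ < j_0, P_E(τ) = exp((j_0 − τ)/(β·P_R·Ω)) for j_0 ≤ τ < j_1, and P_E(τ) = 1 + exp((j_0 − τ)/(β·P_R·Ω)) − exp((j_1 − τ)/(β·(P_R + P_Δ)·Ω)) for τ ≥ j_1. Then the minimum value of P_E over ℝ equals exp((j_0 − j_1)/(β·P_R·Ω)) if j_1 ≥ τ_0, and equals 1 + exp((j_0 − τ_0)/(β·P_R·Ω)) − exp((j_1 −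 τ_0)/(β·(P_R + P_Δ)·Ω)) if j_1 < τ_0. -/
/-!
Above the upper threshold `j₁` the error probability is
`F τ = 1 + exp ((j₀ - τ) / c) - exp ((j₁ - τ) / d)` with `c = β P_R Ω < d = β (P_R + P_Δ) Ω`.
Comparing `F' τ = exp ((j₁ - τ) / d) / d - exp ((j₀ - τ) / c) / c` on a logarithmic scale, the
gap of exponents is affine in `τ` and vanishes exactly at `τ₀`, so `F` decreases up to `τ₀` and
increases afterwards. Below `j₁` the error probability is at least `exp ((j₀ - j₁) / c) = F j₁`,
hence the minimum is `F (max j₁ τ₀)`.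
-/

open Real

namespace DetectionError

/-- The branch of the error probability for `τ ≥ j₁`. -/
noncomputable def tail (c d j₀ j₁ τ : ℝ) : ℝ :=
  1 + exp ((j₀ - τ) / c) - exp ((j₁ - τ) / d)

/-- The unique critical point of `tail c d j₀ j₁` when `0 < c < d`. -/
noncomputable def critical (c d j₀ j₁ : ℝ) : ℝ :=
  (d * j₀ - c * j₁ + c * d * (log d - log c)) / (d - c)

noncomputable def prob (c d j₀ j₁ τ : ℝ) : ℝ :=
  if τ < j₀ then 1
  else if τ < j₁ then exp ((j₀ - τ) / c)
  else tail c d j₀ j₁ τ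

variable {c d j₀ j₁ : ℝ}

theorem tail_self : tail c d j₀ j₁ j₁ = exp ((j₀ - j₁) / c) := by
  simp [tail]

theorem hasDerivAt_tail (τ : ℝ) :
    HasDerivAt (tail c d j₀ j₁) (exp ((j₁ - τ) / d) / d - exp ((j₀ - τ) / c) / c) τ := by
  have h₀ : HasDerivAt (fun t => (j₀ - t) / c) (-1 / c) τ := by
    simpa using ((hasDerivAt_id τ).const_sub j₀).div_const c
  have h₁ : HasDerivAt (fun t => (j₁ - t) / d) (-1 / d) τ := by
    simpa using ((hasDerivAt_id τ).const_sub j₁).div_const d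
  refine ((h₀.exp.const_add 1).sub h₁.exp).congr_deriv ?_
  ring

theorem exp_div_eq_exp_sub_log (hc : 0 < c) (x : ℝ) : exp x / c = exp (x - log c) := by
  rw [exp_sub, exp_log hc]

theorem exponent_gap (hc : 0 < c) (hcd : c < d) (τ : ℝ) :
    ((j₁ - τ) / d - log d) - ((j₀ - τ) / c - log c)
      = (τ - critical c d j₀ j₁) * ((d - c) / (c * d)) := by
  have hd : 0 < d := hc.trans hcd
  have hdc : d - c ≠ 0 := (sub_pos.2 hcd).ne'
  unfold critical
  field_simp
  ring

theorem monotoneOn_tail (hc : 0 < c) (hcd : c < d) :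
    MonotoneOn (tail c d j₀ j₁) (Set.Ici (critical c d j₀ j₁)) := by
  have hd : 0 < d := hc.trans hcd
  refine monotoneOn_of_deriv_nonneg (convex_Ici _)
    (fun x _ => (hasDerivAt_tail x).continuousAt.continuousWithinAt)
    (fun x _ => (hasDerivAt_tail x).differentiableAt.differentiableWithinAt) fun x hx => ?_
  rw [interior_Ici] at hx
  rw [(hasDerivAt_tail x).deriv, sub_nonneg, exp_div_eq_exp_sub_log hc,
    exp_div_eq_exp_sub_log hd, exp_le_exp, ← sub_nonneg, exponent_gap hc hcd]
  exact mul_nonneg (sub_nonneg.2 hx.le) (div_pos (sub_pos.2 hcd) (mul_pos hc hd)).le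

theorem antitoneOn_tail (hc : 0 < c) (hcd : c < d) :
    AntitoneOn (tail c d j₀ j₁) (Set.Iic (critical c d j₀ j₁)) := by
  have hd : 0 < d := hc.trans hcd
  refine antitoneOn_of_deriv_nonpos (convex_Iic _)
    (fun x _ => (hasDerivAt_tail x).continuousAt.continuousWithinAt)
    (fun x _ => (hasDerivAt_tail x).differentiableAt.differentiableWithinAt) fun x hx => ?_
  rw [interior_Iic] at hx
  rw [(hasDerivAt_tail x).deriv, sub_nonpos, exp_div_eq_exp_sub_log hc,
    exp_div_eq_exp_sub_log hd, exp_le_exp, ← sub_nonpos, exponent_gap hc hcd]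
  exact mul_nonpos_of_nonpos_of_nonneg (sub_nonpos.2 hx.le)
    (div_pos (sub_pos.2 hcd) (mul_pos hc hd)).le

theorem tail_max_le (hc : 0 < c) (hcd : c < d) {τ : ℝ} (hτ : j₁ ≤ τ) :
    tail c d j₀ j₁ (max j₁ (critical c d j₀ j₁)) ≤ tail c d j₀ j₁ τ := by
  rcases le_total τ (critical c d j₀ j₁) with h | h
  · rw [max_eq_right (hτ.trans h)]
    exact antitoneOn_tail hc hcd h Set.self_mem_Iic h
  · exact monotoneOn_tail hc hcd (Set.mem_Ici.2 (le_max_right _ _)) h (max_le hτ h)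

theorem isLeast_range_prob (hc : 0 < c) (hcd : c < d) (hj : j₀ ≤ j₁) :
    IsLeast (Set.range (prob c d j₀ j₁)) (tail c d j₀ j₁ (max j₁ (critical c d j₀ j₁))) := by
  have below_j₁ : tail c d j₀ j₁ (max j₁ (critical c d j₀ j₁)) ≤ exp ((j₀ - j₁) / c) :=
    tail_self (d := d) ▸ tail_max_le hc hcd le_rfl
  refine ⟨⟨max j₁ (critical c d j₀ j₁), ?_⟩, ?_⟩
  · simp [prob, (hj.trans (le_max_left _ _)).not_gt]
  · rintro _ ⟨τ, rfl⟩
    unfold prob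
    split_ifs with h₀ h₁
    · exact below_j₁.trans
        (exp_le_one_iff.2 (div_nonpos_of_nonpos_of_nonneg (sub_nonpos.2 hj) hc.le))
    · exact below_j₁.trans (exp_le_exp.2 (by gcongr))
    · exact tail_max_le hc hcd (not_lt.1 h₁)

end DetectionError

open DetectionError in
theorem minimum_detection_error_probability_general
    (a g σ2 P_R P_Δ β Ω : ℝ)
    (hg : 0 ≤ g)
    (hPR : 0 < P_R) (hPΔ : 0 < P_Δ) (hβ : 0 < β) (hΩ : 0 < Ω)
    (j₀ j₁ τ₀ : ℝ) (P_E : ℝ → ℝ)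
    (hj₀ : j₀ = a + P_R * g + σ2)
    (hj₁ : j₁ = a + (P_R + P_Δ) * g + σ2)
    (hτ₀ : τ₀ = -(β * P_R * (P_R + P_Δ) * Ω / P_Δ) * Real.log (P_R / (P_R + P_Δ))
        + a + σ2)
    (hPE : ∀ τ, P_E τ =
      if τ < j₀ then 1
      else if τ < j₁ then exp ((j₀ - τ) / (β * P_R * Ω))
      else 1 + exp ((j₀ - τ) / (β * P_R * Ω))
        - exp ((j₁ - τ) / (β * (P_R + P_Δ) * Ω))) :
    IsLeast (Set.range P_E)
      (if j₁ ≥ τ₀ then exp ((j₀ - j₁) / (β * P_R * Ω))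
       else 1 + exp ((j₀ - τ₀) / (β * P_R * Ω))
         - exp ((j₁ - τ₀) / (β * (P_R + P_Δ) * Ω))) := by
  set c := β * P_R * Ω
  set d := β * (P_R + P_Δ) * Ω
  have hc : 0 < c := by positivity
  have hcd : c < d := by simp only [c, d]; gcongr; exact lt_add_of_pos_right P_R hPΔ
  have hj : j₀ ≤ j₁ := by rw [hj₀, hj₁]; linarith [mul_nonneg hPΔ.le hg]
  have hP : P_E = prob c d j₀ j₁ := funext hPE
  have hlog : log d - log c = -log (P_R / (P_R + P_Δ)) := by
    rw [← log_div (hc.trans hcd).ne' hc.ne', ← log_inv, inv_div]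
    congr 1
    field_simp
    ring
  have hcrit : critical c d j₀ j₁ = τ₀ := by
    have hdc : d - c = β * P_Δ * Ω := by ring
    unfold critical
    rw [hlog, hdc, hj₀, hj₁, hτ₀]
    field_simp
    ring
  have hmin : (if j₁ ≥ τ₀ then exp ((j₀ - j₁) / c)
      else 1 + exp ((j₀ - τ₀) / c) - exp ((j₁ - τ₀) / d)) = tail c d j₀ j₁ (max j₁ τ₀) := by
    split_ifs with h
    · rw [max_eq_left h, tail_self]
    · rw [max_eq_right (not_le.1 h).le, tail]
  rw [hmin, hP, ← hcrit]
  exact isLeast_range_prob hc hcd hj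

/-- **Corollary 1: minimum detection error probability.** With
`j₀ = a + P_R·g + σ²`, `j₁ = a + (P_R+P_Δ)·g + σ²`,
`τ₀ = −(β·P_R·(P_R+P_Δ)·Ω/P_Δ)·ln(P_R/(P_R+P_Δ)) + a + σ²` and the piecewise
detection error probability `P_E`, the minimum value of `P_E` over `ℝ` equals
`exp((j₀−j₁)/(β·P_R·Ω))` if `j₁ ≥ τ₀`, and
`1 + exp((j₀−τ₀)/(β·P_R·Ω)) − exp((j₁−τ₀)/(β·(P_R+P_Δ)·Ω))` if `j₁ < τ₀`. -/
theorem minimum_detection_error_probability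
    (a g σ2 P_R P_Δ β Ω : ℝ)
    (ha : 0 ≤ a) (hg : 0 ≤ g) (hσ : 0 < σ2)
    (hPR : 0 < P_R) (hPΔ : 0 < P_Δ) (hβ : 0 < β) (hΩ : 0 < Ω)
    (j₀ j₁ τ₀ : ℝ) (P_E : ℝ → ℝ)
    (hj₀ : j₀ = a + P_R * g + σ2)
    (hj₁ : j₁ = a + (P_R + P_Δ) * g + σ2)
    (hτ₀ : τ₀ = -(β * P_R * (P_R + P_Δ) * Ω / P_Δ) * Real.log (P_R / (P_R + P_Δ))
        + a + σ2)
    (hPE : ∀ τ, P_E τ =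
      if τ < j₀ then 1
      else if τ < j₁ then exp ((j₀ - τ) / (β * P_R * Ω))
      else 1 + exp ((j₀ - τ) / (β * P_R * Ω))
        - exp ((j₁ - τ) / (β * (P_R + P_Δ) * Ω))) :
    IsLeast (Set.range P_E)
      (if j₁ ≥ τ₀ then exp ((j₀ - j₁) / (β * P_R * Ω))
       else 1 + exp ((j₀ - τ₀) / (β * P_R * Ω))
         - exp ((j₁ - τ₀) / (β * (P_R + P_Δ) * Ω))) :=
  minimum_detection_error_probability_general a g σ2 P_R P_Δ β Ω hg hPR hPΔ hβ hΩ j₀ j₁ τ₀ P_E hj₀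
    hj₁ hτ₀ hPE
end

section
/- Fix reals a ≥ 0, g > 0, σ² > 0, P_R > 0, P_Δ > 0, Ω > 0, and set j_0 = a + P_R·g + σ² and j_1 = a + (P_R + P_Δ)·g + σ². For β > 0 define τ_0(β) = −(β·P_R·(P_R + P_Δ)·Ω/P_Δ)·ln(P_R/(P_R + P_Δ)) + a + σ², and define the minimum detection error probability P_E*(β) = exp((j_0 − j_1)/(β·P_R·Ω)) if j_1 ≥ τ_0(β), and P_E*(β) = 1 + exp((j_0 − τ_0(β))/(β·P_R·Ω)) − exp((j_1 − τ_0(β))/(β·(P_R + P_Δ)·Ω)) if j_1 < τ_0(β). Then β ↦ P_E*(β) is strictly monotonically increasing on (0, 1). -/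
open Real

/-- **Corollary 2.** The minimum detection error probability
`P_E*(β)` (with optimal threshold `τ₀(β)`) is strictly monotonically increasing
in the channel-uncertainty degree `β` on `(0, 1)`. -/
theorem minimum_detection_error_strictMonoOn
    (a g σ2 P_R P_Δ Ω : ℝ)
    (ha : 0 ≤ a) (hg : 0 < g) (hσ : 0 < σ2)
    (hPR : 0 < P_R) (hPΔ : 0 < P_Δ) (hΩ : 0 < Ω)
    (j₀ j₁ : ℝ) (τ₀ P_Estar : ℝ → ℝ)
    (hj₀ : j₀ = a + P_R * g + σ2)
    (hj₁ : j₁ = a + (P_R + P_Δ) * g + σ2)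
    (hτ₀ : ∀ β : ℝ, τ₀ β =
      -(β * P_R * (P_R + P_Δ) * Ω / P_Δ) * Real.log (P_R / (P_R + P_Δ)) + a + σ2)
    (hPEstar : ∀ β : ℝ, P_Estar β =
      if j₁ ≥ τ₀ β then exp ((j₀ - j₁) / (β * P_R * Ω))
      else 1 + exp ((j₀ - τ₀ β) / (β * P_R * Ω))
        - exp ((j₁ - τ₀ β) / (β * (P_R + P_Δ) * Ω))) :
    StrictMonoOn P_Estar (Set.Ioo (0 : ℝ) 1) := by
  have hPRΔ : 0 < P_R + P_Δ := by linarith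
  have hPRne : P_R ≠ 0 := ne_of_gt hPR
  have hPΔne : P_Δ ≠ 0 := ne_of_gt hPΔ
  have hPRΔne : P_R + P_Δ ≠ 0 := ne_of_gt hPRΔ
  have hΩne : Ω ≠ 0 := ne_of_gt hΩ
  set L := Real.log (P_R / (P_R + P_Δ)) with hLdef
  have hL : L < 0 := Real.log_neg (by positivity) ((div_lt_one hPRΔ).2 (by linarith))
  have hj : j₀ - j₁ = -(P_Δ * g) := by rw [hj₀, hj₁]; ring
  -- linear form of τ₀
  set M : ℝ := (P_R * (P_R + P_Δ) * Ω / P_Δ) * (-L) with hMdef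
  have hM : 0 < M := by
    apply mul_pos (by positivity) (neg_pos.2 hL)
  have hτ' : ∀ β : ℝ, τ₀ β = β * M + a + σ2 := by
    intro β; rw [hτ₀, hMdef]; ring
  -- first piece : weak and strict monotonicity
  have hF1le : ∀ x y : ℝ, 0 < x → x ≤ y →
      exp ((j₀ - j₁) / (x * P_R * Ω)) ≤ exp ((j₀ - j₁) / (y * P_R * Ω)) := by
    intro x y hx hxy
    have hy : 0 < y := lt_of_lt_of_le hx hxy
    apply exp_le_exp.2
    rw [hj, neg_div, neg_div, neg_le_neg_iff]
    gcongr
  have hF1lt : ∀ x y : ℝ, 0 < x → x < y →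
      exp ((j₀ - j₁) / (x * P_R * Ω)) < exp ((j₀ - j₁) / (y * P_R * Ω)) := by
    intro x y hx hxy
    have hy : 0 < y := hx.trans hxy
    apply exp_lt_exp.2
    rw [hj, neg_div, neg_div, neg_lt_neg_iff]
    have h1 : 0 < x * P_R * Ω := by positivity
    apply div_lt_div_of_pos_left (by positivity) h1
    have : 0 < P_R * Ω := by positivity
    nlinarith
  -- exponent rewrites for the second piece
  have hE1 : ∀ x : ℝ, x ≠ 0 → (j₀ - τ₀ x) / (x * P_R * Ω)
      = g / (x * Ω) + (P_R + P_Δ) / P_Δ * L := by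
    intro x hx; rw [hj₀, hτ₀]; field_simp; ring
  have hE2 : ∀ x : ℝ, x ≠ 0 → (j₁ - τ₀ x) / (x * (P_R + P_Δ) * Ω)
      = g / (x * Ω) + P_R / P_Δ * L := by
    intro x hx; rw [hj₁, hτ₀]; field_simp; ring
  -- second piece : strict monotonicity
  have hF2lt : ∀ x y : ℝ, 0 < x → x < y →
      1 + exp ((j₀ - τ₀ x) / (x * P_R * Ω)) - exp ((j₁ - τ₀ x) / (x * (P_R + P_Δ) * Ω))
      < 1 + exp ((j₀ - τ₀ y) / (y * P_R * Ω)) - exp ((j₁ - τ₀ y) / (y * (P_R + P_Δ) * Ω)) := by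
    intro x y hx hxy
    have hy : 0 < y := hx.trans hxy
    rw [hE1 x (ne_of_gt hx), hE2 x (ne_of_gt hx), hE1 y (ne_of_gt hy), hE2 y (ne_of_gt hy)]
    rw [exp_add, exp_add, exp_add, exp_add]
    have hv : exp (g / (y * Ω)) < exp (g / (x * Ω)) := by
      apply exp_lt_exp.2
      apply div_lt_div_of_pos_left hg (by positivity)
      nlinarith
    have hc : (P_R + P_Δ) / P_Δ * L < P_R / P_Δ * L := by
      apply mul_lt_mul_of_neg_right _ hL
      rw [div_lt_div_iff₀ hPΔ hPΔ]
      nlinarith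
    have hd : exp ((P_R + P_Δ) / P_Δ * L) < exp (P_R / P_Δ * L) := exp_lt_exp.2 hc
    nlinarith [mul_pos (sub_pos.2 hv) (sub_pos.2 hd)]
  -- boundary point
  set βb : ℝ := (P_R + P_Δ) * g / M with hβbdef
  have hβb0 : 0 < βb := by positivity
  have hτb : τ₀ βb = j₁ := by
    rw [hτ', hj₁, hβbdef]; field_simp; ring
  -- main argument
  intro β₁ hβ₁ β₂ hβ₂ h12
  obtain ⟨hβ₁0, _⟩ := hβ₁
  obtain ⟨hβ₂0, _⟩ := hβ₂
  rw [hPEstar β₁, hPEstar β₂]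
  by_cases h1 : j₁ ≥ τ₀ β₁ <;> by_cases h2 : j₁ ≥ τ₀ β₂
  · rw [if_pos h1, if_pos h2]
    exact hF1lt β₁ β₂ hβ₁0 h12
  · rw [if_pos h1, if_neg h2]
    push_neg at h2
    have hb2 : βb < β₂ := by
      rw [hτ' β₂] at h2
      have : βb * M < β₂ * M := by
        have hjb : j₁ = βb * M + a + σ2 := by rw [← hτ' βb, hτb]
        linarith [hjb ▸ h2]
      exact lt_of_mul_lt_mul_right this (le_of_lt hM)
    have hb1 : β₁ ≤ βb := by
      rw [hτ' β₁] at h1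
      have hjb : j₁ = βb * M + a + σ2 := by rw [← hτ' βb, hτb]
      have : β₁ * M ≤ βb * M := by linarith [hjb ▸ h1]
      exact le_of_mul_le_mul_right this hM
    calc exp ((j₀ - j₁) / (β₁ * P_R * Ω))
        ≤ exp ((j₀ - j₁) / (βb * P_R * Ω)) := hF1le β₁ βb hβ₁0 hb1
      _ = 1 + exp ((j₀ - τ₀ βb) / (βb * P_R * Ω))
            - exp ((j₁ - τ₀ βb) / (βb * (P_R + P_Δ) * Ω)) := by
          rw [hτb]; simp
      _ < _ := hF2lt βb β₂ hβb0 hb2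
  · exfalso
    push_neg at h1
    rw [hτ' β₁] at h1
    rw [hτ' β₂] at h2
    nlinarith [mul_pos (sub_pos.2 h12) hM]
  · rw [if_neg h1, if_neg h2]
    exact hF2lt β₁ β₂ hβ₁0 h12
end

section
/- Fix reals a ≥ 0, g ≥ 0, σ² > 0, P_R > 0, P_Δ > 0, β > 0, Ω > 0, and set j_0 = a + P_R·g + σ², j_1 = a + (P_R + P_Δ)·g + σ², and τ_0 = −(β·P_R·(P_R + P_Δ)·Ω/P_Δ)·ln(P_R/(P_R + P_Δ)) + a + σ². Define h : ℝ → ℝ by h(τ) = 1 + exp((j_0 − τ)/(β·P_R·Ω)) − exp((j_1 − τ)/(β·(P_R + P_Δ)·Ω)). If j_1 < τ_0, then h is strictly decreasing on the interval [j_1, τ_0] and strictly increasing on the interval [τ_0, ∞). -/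
open Real

/-- **monotonicity step in the proof of Theorem 3.** With
`j₀ = a + P_R·g + σ²`, `j₁ = a + (P_R+P_Δ)·g + σ²`,
`τ₀ = −(β·P_R·(P_R+P_Δ)·Ω/P_Δ)·ln(P_R/(P_R+P_Δ)) + a + σ²`, the third branch
`h(τ) = 1 + exp((j₀−τ)/(β·P_R·Ω)) − exp((j₁−τ)/(β·(P_R+P_Δ)·Ω))` of the detection
error probability is, when `j₁ < τ₀`, strictly decreasing on `[j₁, τ₀]` and strictly
increasing on `[τ₀, ∞)`. -/
theorem third_branch_monotonicity
    (a g σ2 P_R P_Δ β Ω : ℝ)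
    (ha : 0 ≤ a) (hg : 0 ≤ g) (hσ : 0 < σ2)
    (hPR : 0 < P_R) (hPΔ : 0 < P_Δ) (hβ : 0 < β) (hΩ : 0 < Ω)
    (j₀ j₁ τ₀ : ℝ) (h : ℝ → ℝ)
    (hj₀ : j₀ = a + P_R * g + σ2)
    (hj₁ : j₁ = a + (P_R + P_Δ) * g + σ2)
    (hτ₀ : τ₀ = -(β * P_R * (P_R + P_Δ) * Ω / P_Δ) * Real.log (P_R / (P_R + P_Δ))
        + a + σ2)
    (hh : ∀ τ, h τ = 1 + exp ((j₀ - τ) / (β * P_R * Ω))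
        - exp ((j₁ - τ) / (β * (P_R + P_Δ) * Ω)))
    (hlt : j₁ < τ₀) :
    StrictAntiOn h (Set.Icc j₁ τ₀) ∧ StrictMonoOn h (Set.Ici τ₀) := by
  set c1 : ℝ := β * P_R * Ω with hc1
  set c2 : ℝ := β * (P_R + P_Δ) * Ω with hc2
  have hPRΔ : 0 < P_R + P_Δ := by linarith
  have hc1pos : 0 < c1 := by positivity
  have hc2pos : 0 < c2 := by positivity
  have hk : 0 < 1 / c1 - 1 / c2 := by
    rw [sub_pos, div_lt_div_iff₀ hc2pos hc1pos]
    have : β * Ω * P_R < β * Ω * (P_R + P_Δ) := by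
      apply mul_lt_mul_of_pos_left _ (by positivity); linarith
    simp only [hc1, hc2, one_mul]; nlinarith
  -- key linear identity for the exponents
  have hlog : Real.log c1 - Real.log c2 = Real.log (P_R / (P_R + P_Δ)) := by
    rw [hc1, hc2, Real.log_div (ne_of_gt hPR) (ne_of_gt hPRΔ),
      Real.log_mul (by positivity) (ne_of_gt hΩ),
      Real.log_mul (ne_of_gt hβ) (ne_of_gt hPR),
      Real.log_mul (by positivity) (ne_of_gt hΩ),
      Real.log_mul (ne_of_gt hβ) (ne_of_gt hPRΔ)]
    ring
  have key : ∀ τ : ℝ, ((j₀ - τ) / c1 - Real.log c1) - ((j₁ - τ) / c2 - Real.log c2)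
      = (1 / c1 - 1 / c2) * (τ₀ - τ) := by
    intro τ
    have hL : Real.log (P_R / (P_R + P_Δ)) = Real.log c1 - Real.log c2 := hlog.symm
    rw [hj₀, hj₁, hτ₀, hL]
    field_simp
    ring
  -- derivative
  set d : ℝ → ℝ := fun τ =>
      exp ((j₁ - τ) / c2 - Real.log c2) - exp ((j₀ - τ) / c1 - Real.log c1) with hd
  have hderiv : ∀ τ : ℝ, HasDerivAt h (d τ) τ := by
    intro τ
    have h1 : HasDerivAt (fun τ : ℝ => exp ((j₀ - τ) / c1))
        (exp ((j₀ - τ) / c1) * (-1 / c1)) τ := by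
      exact (((hasDerivAt_id τ).const_sub j₀).div_const c1).exp
    have h2 : HasDerivAt (fun τ : ℝ => exp ((j₁ - τ) / c2))
        (exp ((j₁ - τ) / c2) * (-1 / c2)) τ := by
      exact (((hasDerivAt_id τ).const_sub j₁).div_const c2).exp
    have h3 : HasDerivAt (fun τ : ℝ => 1 + exp ((j₀ - τ) / c1) - exp ((j₁ - τ) / c2))
        (exp ((j₀ - τ) / c1) * (-1 / c1) - exp ((j₁ - τ) / c2) * (-1 / c2)) τ :=
      (h1.const_add 1).sub h2
    have heq : (fun τ : ℝ => 1 + exp ((j₀ - τ) / c1) - exp ((j₁ - τ) / c2)) = h := by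
      funext τ; rw [hh τ]
    rw [heq] at h3
    convert h3 using 1
    rw [hd]
    simp only [Real.exp_sub, Real.exp_log hc1pos, Real.exp_log hc2pos]
    field_simp
    ring
  have hdiff : Differentiable ℝ h := fun τ => (hderiv τ).differentiableAt
  have hderiv' : ∀ τ, deriv h τ = d τ := fun τ => (hderiv τ).deriv
  constructor
  · apply strictAntiOn_of_deriv_neg (convex_Icc _ _) (hdiff.continuous.continuousOn)
    intro x hx
    rw [interior_Icc] at hx
    rw [hderiv', hd, sub_neg]
    apply Real.exp_lt_exp.2
    have := key x
    nlinarith [mul_pos hk (sub_pos.2 hx.2)]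
  · apply strictMonoOn_of_deriv_pos (convex_Ici _) (hdiff.continuous.continuousOn)
    intro x hx
    rw [interior_Ici] at hx
    rw [hderiv', hd, sub_pos]
    apply Real.exp_lt_exp.2
    have := key x
    have hx' : x - τ₀ > 0 := sub_pos.2 hx
    nlinarith [mul_pos hk hx']
end

section
/- Let ρ ∈ (0,1), P_S > 0, P_R > 0, k ∈ (0,1], σ_R² > 0, σ_D² > 0, and Ω_SR, Ω_RR, Ω_RD > 0. Let U, V, W be mutually independent real random variables, exponentially distributed with means Ω_SR, Ω_RR, Ω_RD respectively. Define Y = min{ (1−ρ)·P_S·U / ((1−ρ)·k·P_R·V + σ_R²), P_R·W/σ_D² }. Then for every x ≥ 0, P(Y ≤ x) = 1 − (P_S·Ω_SR/(P_S·Ω_SR + k·P_R·Ω_RR·x))·exp(−(σ_R²/((1−ρ)·P_S·Ω_SR) + σ_D²/(P_R·Ω_RD))·x). -/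
/-!
The complement of `{Y ≤ x}` is the intersection of `{x < (1-ρ) P_S U / ((1-ρ) k P_R V + σ_R²)}`
and `{σ_D² x / P_R < W}`, two independent events, and the second is an exponential tail. Given
`V = v`, the first is the tail of `U` beyond a point affine in `v`, so its conditional probability
is `e^{-(β + γ v)}`; averaging over `V` is then the Laplace transform of the exponential law,
`E[e^{-γ V}] = 1 / (1 + γ Ω_RR)`, which produces the rational factor.
-/

open MeasureTheory ProbabilityTheory Real Set

namespace ProbabilityTheory

variable {r : ℝ}

lemma measureReal_expMeasure_Ioi (hr : 0 < r) {t : ℝ} (ht : 0 ≤ t) :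
    (expMeasure r).real (Ioi t) = exp (-(r * t)) := by
  have := isProbabilityMeasure_expMeasure hr
  rw [← compl_Iic, probReal_compl_eq_one_sub measurableSet_Iic, ← cdf_eq_real,
    cdf_expMeasure_eq hr, if_pos ht, sub_sub_cancel]

lemma expMeasure_Ioi (hr : 0 < r) {t : ℝ} (ht : 0 ≤ t) :
    expMeasure r (Ioi t) = ENNReal.ofReal (exp (-(r * t))) := by
  have := isProbabilityMeasure_expMeasure hr
  rw [← measureReal_expMeasure_Ioi hr ht, ofReal_measureReal]

lemma expMeasure_eq_withDensity (r : ℝ) :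
    expMeasure r = volume.withDensity (exponentialPDF r) := rfl

lemma ae_nonneg_expMeasure (r : ℝ) : ∀ᵐ v ∂expMeasure r, 0 ≤ v := by
  refine measure_mono_null (t := Iio 0) (fun v (hv : ¬ 0 ≤ v) => not_le.mp hv) ?_
  rw [expMeasure_eq_withDensity, withDensity_apply _ measurableSet_Iio]
  exact lintegral_exponentialPDF_of_nonpos le_rfl

lemma lintegral_exp_neg_mul_expMeasure (hr : 0 < r) {c : ℝ} (hc : -r < c) :
    ∫⁻ v, ENNReal.ofReal (exp (-(c * v))) ∂expMeasure r = ENNReal.ofReal (r / (r + c)) := by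
  have hrc : -(r + c) < 0 := by linarith
  have hdensity : ∀ v, exponentialPDF r v * ENNReal.ofReal (exp (-(c * v)))
      = (Ici 0).indicator (fun v => ENNReal.ofReal (r * exp (-(r + c) * v))) v := by
    intro v
    by_cases hv : 0 ≤ v
    · rw [indicator_of_mem (mem_Ici.mpr hv), exponentialPDF_of_nonneg hv,
        ← ENNReal.ofReal_mul (by positivity), mul_assoc, ← exp_add]
      ring_nf
    · rw [indicator_of_notMem (mt mem_Ici.mp hv), exponentialPDF_of_neg (not_le.mp hv), zero_mul]
  have hint : IntegrableOn (fun v => r * exp (-(r + c) * v)) (Ioi 0) :=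
    (integrableOn_exp_mul_Ioi hrc 0).const_mul r
  have hpdf : Measurable (exponentialPDF r) := (measurable_exponentialPDFReal r).ennreal_ofReal
  rw [expMeasure_eq_withDensity, lintegral_withDensity_eq_lintegral_mul _ hpdf (by fun_prop)]
  simp only [Pi.mul_apply, hdensity]
  rw [lintegral_indicator measurableSet_Ici, ← restrict_Ioi_eq_restrict_Ici,
    ← ofReal_integral_eq_lintegral_ofReal hint (ae_of_all _ fun v => by positivity),
    integral_const_mul, integral_exp_mul_Ioi hrc, mul_zero, exp_zero]
  congr 1
  field_simp

lemma prod_expMeasure_eq_lintegral_of_slice_eq_Ioi (hr : 0 < r) {ν : Measure ℝ} [SFinite ν]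
    {S : Set (ℝ × ℝ)} (hS : MeasurableSet S) {g : ℝ → ℝ}
    (hg : ∀ᵐ v ∂ν, 0 ≤ g v ∧ (fun u => (u, v)) ⁻¹' S = Ioi (g v)) :
    (expMeasure r).prod ν S = ∫⁻ v, ENNReal.ofReal (exp (-(r * g v))) ∂ν := by
  have := isProbabilityMeasure_expMeasure hr
  rw [Measure.prod_apply_symm hS]
  refine lintegral_congr_ae (hg.mono fun v ⟨hgv, hslice⟩ => ?_)
  dsimp only
  rw [hslice, expMeasure_Ioi hr hgv]

lemma measureReal_prod_expMeasure_lt_div {s a b c x : ℝ} (hr : 0 < r) (hs : 0 < s) (ha : 0 < a)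
    (hb : 0 ≤ b) (hc : 0 < c) (hx : 0 ≤ x) :
    ((expMeasure r).prod (expMeasure s)).real {p | x < a * p.1 / (b * p.2 + c)}
      = exp (-(r * c * x / a)) * (s / (s + r * b * x / a)) := by
  set S : Set (ℝ × ℝ) := {p | x < a * p.1 / (b * p.2 + c)} with hSdef
  have hS : MeasurableSet S := measurableSet_lt measurable_const (by fun_prop)
  have hslice : ∀ᵐ v ∂expMeasure s,
      0 ≤ x * (b * v + c) / a ∧ (fun u => (u, v)) ⁻¹' S = Ioi (x * (b * v + c) / a) := by
    filter_upwards [ae_nonneg_expMeasure s] with v hv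
    have hden : 0 < b * v + c := by positivity
    refine ⟨by positivity, ?_⟩
    ext u
    simp only [hSdef, mem_preimage, mem_Ioi, mem_ofPred_eq]
    rw [lt_div_iff₀ hden, div_lt_iff₀' ha]
  have hsplit : ∀ v, ENNReal.ofReal (exp (-(r * (x * (b * v + c) / a))))
      = ENNReal.ofReal (exp (-(r * c * x / a))) * ENNReal.ofReal (exp (-(r * b * x / a * v))) := by
    intro v
    rw [← ENNReal.ofReal_mul (exp_pos _).le, ← exp_add]
    ring_nf
  have hrbx : -s < r * b * x / a := (neg_neg_of_pos hs).trans_le (by positivity)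
  have := isProbabilityMeasure_expMeasure hs
  rw [measureReal_def, prod_expMeasure_eq_lintegral_of_slice_eq_Ioi hr hS hslice]
  simp only [hsplit]
  rw [lintegral_const_mul _ (by fun_prop), lintegral_exp_neg_mul_expMeasure hs hrbx,
    ← ENNReal.ofReal_mul (exp_pos _).le, ENNReal.toReal_ofReal (by positivity)]

lemma iIndepFun.measureReal_preimage_prodMk_inter_preimage {Ω β : Type*} [MeasurableSpace Ω]
    [MeasurableSpace β] {μ : Measure Ω} [IsProbabilityMeasure μ] {U V W : Ω → β}
    (hU : Measurable U) (hV : Measurable V) (hW : Measurable W) (hindep : iIndepFun ![U, V, W] μ)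
    {S : Set (β × β)} {T : Set β} (hS : MeasurableSet S) (hT : MeasurableSet T) :
    μ.real ((fun ω => (U ω, V ω)) ⁻¹' S ∩ W ⁻¹' T)
      = ((μ.map U).prod (μ.map V)).real S * (μ.map W).real T := by
  have hUV : IndepFun U V μ := by simpa using hindep.indepFun (show (0 : Fin 3) ≠ 1 by decide)
  have hUV_W : IndepFun (fun ω => (U ω, V ω)) W μ := by
    have hmeas : ∀ i, Measurable (![U, V, W] i) := by
      intro i; fin_cases i <;> assumption
    simpa using hindep.indepFun_prodMk hmeas 0 1 2 (by decide) (by decide)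
  rw [← (indepFun_iff_map_prod_eq_prod_map_map hU.aemeasurable hV.aemeasurable).mp hUV,
    map_measureReal_apply (hU.prodMk hV) hS, map_measureReal_apply hW hT, measureReal_def,
    hUV_W.measure_inter_preimage_eq_mul S T hS hT, ENNReal.toReal_mul, measureReal_def,
    measureReal_def]

end ProbabilityTheory

/-- **closed-form CDF of `Y_{H₀}`, equation (64) with φ = 0.**
With `U, V, W` mutually independent exponentials of means `Ω_SR, Ω_RR, Ω_RD`, the
end-to-end decode-and-forward SINR
`Y = min{ (1−ρ)P_S·U / ((1−ρ)k·P_R·V + σ_R²), P_R·W/σ_D² }` satisfies, for `x ≥ 0`,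
`P(Y ≤ x) = 1 − (P_S·Ω_SR/(P_S·Ω_SR + k·P_R·Ω_RR·x))·
  exp(−(σ_R²/((1−ρ)P_S·Ω_SR) + σ_D²/(P_R·Ω_RD))·x)`. -/
theorem cdf_Y_H0
    {α : Type*} [MeasureSpace α] [IsProbabilityMeasure (ℙ : Measure α)]
    (U V W : α → ℝ) (hUm : Measurable U) (hVm : Measurable V) (hWm : Measurable W)
    (ρ P_S P_R k σR2 σD2 Ω_SR Ω_RR Ω_RD : ℝ)
    (hρ : ρ ∈ Set.Ioo (0 : ℝ) 1) (hPS : 0 < P_S) (hPR : 0 < P_R)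
    (hk : k ∈ Set.Ioc (0 : ℝ) 1) (hσR : 0 < σR2) (hσD : 0 < σD2)
    (hΩSR : 0 < Ω_SR) (hΩRR : 0 < Ω_RR) (hΩRD : 0 < Ω_RD)
    (hU : Measure.map U ℙ = expMeasure (1 / Ω_SR))
    (hV : Measure.map V ℙ = expMeasure (1 / Ω_RR))
    (hW : Measure.map W ℙ = expMeasure (1 / Ω_RD))
    (hindep : iIndepFun (β := fun _ : Fin 3 => ℝ)
      ![U, V, W] ℙ)
    (Y : α → ℝ)
    (hY : ∀ ω, Y ω = min ((1 - ρ) * P_S * U ω / ((1 - ρ) * k * P_R * V ω + σR2))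
        (P_R * W ω / σD2)) :
    ∀ x : ℝ, 0 ≤ x →
      (ℙ {ω | Y ω ≤ x}).toReal
        = 1 - (P_S * Ω_SR / (P_S * Ω_SR + k * P_R * Ω_RR * x))
            * exp (-(σR2 / ((1 - ρ) * P_S * Ω_SR) + σD2 / (P_R * Ω_RD)) * x) := by
  intro x hx
  have h1ρ : 0 < 1 - ρ := sub_pos.mpr hρ.2
  have hk0 : 0 ≤ k := hk.1.le
  set S : Set (ℝ × ℝ) :=
    {p | x < (1 - ρ) * P_S * p.1 / ((1 - ρ) * k * P_R * p.2 + σR2)} with hSdef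
  have hS : MeasurableSet S := measurableSet_lt measurable_const (by fun_prop)
  have hevent : {ω | Y ω ≤ x}
      = ((fun ω => (U ω, V ω)) ⁻¹' S ∩ W ⁻¹' Ioi (σD2 * x / P_R))ᶜ := by
    ext ω
    simp only [hY, min_le_iff, mem_compl_iff, mem_inter_iff, mem_preimage, mem_Ioi, hSdef,
      mem_ofPred_eq, not_and_or, not_lt]
    refine or_congr Iff.rfl ?_
    rw [div_le_iff₀ hσD, le_div_iff₀ hPR, mul_comm, mul_comm x]
  have hexponent : -(1 / Ω_SR * σR2 * x / ((1 - ρ) * P_S)) + -(1 / Ω_RD * (σD2 * x / P_R))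
      = -(σR2 / ((1 - ρ) * P_S * Ω_SR) + σD2 / (P_R * Ω_RD)) * x := by
    field_simp
    ring
  have hden : 0 < P_S * Ω_SR + k * P_R * Ω_RR * x := by positivity
  have hfactor : 1 / Ω_RR / (1 / Ω_RR + 1 / Ω_SR * ((1 - ρ) * k * P_R) * x / ((1 - ρ) * P_S))
      = P_S * Ω_SR / (P_S * Ω_SR + k * P_R * Ω_RR * x) := by
    field_simp
  rw [← measureReal_def, hevent, probReal_compl_eq_one_sub ((hUm.prodMk hVm hS).inter
      (hWm measurableSet_Ioi)), hindep.measureReal_preimage_prodMk_inter_preimage hUm hVm hWm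
      hS measurableSet_Ioi, hU, hV, hW,
    measureReal_prod_expMeasure_lt_div (by positivity) (by positivity) (by positivity)
      (by positivity) hσR hx,
    measureReal_expMeasure_Ioi (by positivity) (by positivity),
    mul_right_comm, ← exp_add, hexponent, hfactor, mul_comm]
end
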